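/- arXiv:1801.03542 — 10 statements merged into one kernel-verified Lean document; each statement's English description precedes it below -/
import Mathlib

section
/- If a graph G contains an odd cycle, then G admits no quantum 2-coloring; that is, there is no assignment of projections (v₁, v₂) to each vertex v, acting on a fixed nonzero finite-dimensional complex Hilbert space, with v₁ + v₂ = I for all v and u_i v_i = 0 for all edges {u,v} and i ∈ {1,2}. -/
open Matrix Finset

def IsProjection {n : ℕ} (p : Matrix (Fin n) (Fin n) ℂ) : Prop :=
  p * p = p ∧ pᴴ = p

/-- A quantum `c`-coloring of `G` in dimension `n`. -/
def IsQuantumColoring {V : Type*} (G : SimpleGraph V) (c n : ℕ)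
    (f : V → Fin c → Matrix (Fin n) (Fin n) ℂ) : Prop :=
  (∀ v i, IsProjection (f v i)) ∧
  (∀ v, ∑ i, f v i = 1) ∧
  (∀ u v, G.Adj u v → ∀ i, f u i * f v i = 0)

theorem no_quantum_two_coloring_of_odd_cycle {V : Type*} (G : SimpleGraph V)
    (v : V) (w : G.Walk v v) (hw : w.IsCycle) (hodd : Odd w.length) :
    ¬ ∃ (n : ℕ) (_ : 0 < n) (f : V → Fin 2 → Matrix (Fin n) (Fin n) ℂ),
      IsQuantumColoring G 2 n f := by
  rintro ⟨n, hn, f, hproj, hsum, hadj⟩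
  haveI : NeZero n := ⟨hn.ne'⟩
  have hsum' : ∀ u, f u 1 = 1 - f u 0 := by
    intro u
    have h := hsum u
    rw [Fin.sum_univ_two] at h
    linear_combination (norm := noncomm_ring) h
  have edge : ∀ a b, G.Adj a b → f b 0 = 1 - f a 0 := by
    intro a b hab
    have h0 := hadj a b hab 0
    have h1 := hadj a b hab 1
    rw [hsum' a, hsum' b] at h1
    linear_combination (norm := noncomm_ring) h0 - h1
  have key : ∀ (a b : V) (p : G.Walk a b),
      f b 0 = if Even p.length then f a 0 else 1 - f a 0 := by
    intro a b p
    induction p with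
    | nil => simp
    | @cons x y z h q ih =>
      rw [SimpleGraph.Walk.length_cons]
      rw [edge x y h] at ih
      rcases Nat.even_or_odd q.length with he | ho
      · rw [if_neg (by simpa [Nat.even_add_one] using he)]
        rw [if_pos he] at ih
        exact ih
      · rw [if_pos (Nat.even_add_one.mpr (Nat.not_even_iff_odd.mpr ho))]
        rw [if_neg (Nat.not_even_iff_odd.mpr ho), sub_sub_cancel] at ih
        exact ih
  have h2 : f v 0 = 1 - f v 0 := by
    have := key v v w
    rwa [if_neg (Nat.not_even_iff_odd.mpr hodd)] at this
  have hadd : f v 0 + f v 0 = 1 := by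
    linear_combination (norm := noncomm_ring) h2
  have hp := (hproj v 0).1
  have h3 : f v 0 = 1 := by
    have := congrArg (fun m => f v 0 * m) hadd
    simp only [mul_add, hp, mul_one] at this
    rw [hadd] at this
    exact this.symm
  rw [h3] at hadd
  have : (1 : Matrix (Fin n) (Fin n) ℂ) = 0 := by
    linear_combination (norm := noncomm_ring) hadd
  exact one_ne_zero this
end

section
/- In any quantum 3-coloring of a graph G, if u and v are adjacent vertices then the projections u_i and v_j commute for all colors i, j ∈ {1,2,3}. -/
open Matrix Finset

private lemma trace_ctm {n : ℕ} (A : Matrix (Fin n) (Fin n) ℂ) :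
    (Aᴴ * A).trace = ((∑ j, ∑ i, Complex.normSq (A i j) : ℝ) : ℂ) := by
  simp [Matrix.trace, Matrix.mul_apply, Matrix.diag, Matrix.conjTranspose_apply,
    Complex.normSq_eq_conj_mul_self]

private lemma eq_zero_of_trace_ctm {n : ℕ} (A : Matrix (Fin n) (Fin n) ℂ)
    (h : (Aᴴ * A).trace = 0) : A = 0 := by
  rw [trace_ctm] at h
  have h' : (∑ j, ∑ i, Complex.normSq (A i j) : ℝ) = 0 := by exact_mod_cast h
  have hz : ∀ j ∈ (univ : Finset (Fin n)), (∑ i, Complex.normSq (A i j)) = 0 := by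
    rw [← Finset.sum_eq_zero_iff_of_nonneg]
    · exact h'
    · intro j _
      exact Finset.sum_nonneg fun i _ => Complex.normSq_nonneg _
  ext i j
  have hz2 : ∀ i ∈ (univ : Finset (Fin n)), Complex.normSq (A i j) = 0 := by
    rw [← Finset.sum_eq_zero_iff_of_nonneg]
    · exact hz j (mem_univ j)
    · intro i _
      exact Complex.normSq_nonneg _
  simpa using Complex.normSq_eq_zero.mp (hz2 i (mem_univ i))

/-- Projections summing to the identity are pairwise orthogonal. -/
private lemma proj_orth {n : ℕ} (p : Fin 3 → Matrix (Fin n) (Fin n) ℂ)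
    (hproj : ∀ i, p i * p i = p i ∧ (p i)ᴴ = p i) (hsum : ∑ i, p i = 1) :
    ∀ i j, i ≠ j → p i * p j = 0 := by
  intro i j hij
  set g : Fin 3 → ℝ := fun k => ∑ a, ∑ b, Complex.normSq ((p k * p j) b a) with hg
  have hcast : ∀ k, ((p k * p j)ᴴ * (p k * p j)).trace = ((g k : ℝ) : ℂ) :=
    fun k => trace_ctm _
  have hterm : ∀ k, ((p k * p j)ᴴ * (p k * p j)) = p j * p k * p j := by
    intro k
    rw [conjTranspose_mul, (hproj k).2, (hproj j).2]
    calc p j * p k * (p k * p j) = p j * (p k * p k) * p j := by noncomm_ring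
      _ = p j * p k * p j := by rw [(hproj k).1]
  have hsumtr : ∑ k, ((p k * p j)ᴴ * (p k * p j)).trace = (p j).trace := by
    have : ∑ k, ((p k * p j)ᴴ * (p k * p j)) = p j := by
      calc ∑ k, ((p k * p j)ᴴ * (p k * p j)) = ∑ k, p j * p k * p j :=
            Finset.sum_congr rfl fun k _ => hterm k
        _ = p j * (∑ k, p k) * p j := by rw [Finset.mul_sum, Finset.sum_mul]
        _ = p j := by rw [hsum, mul_one, (hproj j).1]
    rw [← Matrix.trace_sum, this]
  have hjterm : ((p j * p j)ᴴ * (p j * p j)).trace = (p j).trace := by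
    rw [hterm j, (hproj j).1, (hproj j).1]
  have h1 : ((p j * p j)ᴴ * (p j * p j)).trace
      + ∑ k ∈ univ.erase j, ((p k * p j)ᴴ * (p k * p j)).trace
      = ∑ k, ((p k * p j)ᴴ * (p k * p j)).trace :=
    Finset.add_sum_erase univ (fun k => ((p k * p j)ᴴ * (p k * p j)).trace) (mem_univ j)
  have hrestC : ∑ k ∈ univ.erase j, ((p k * p j)ᴴ * (p k * p j)).trace = 0 := by
    rw [hsumtr, hjterm] at h1
    linear_combination h1
  have hrestR : ∑ k ∈ univ.erase j, g k = 0 := by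
    have : ((∑ k ∈ univ.erase j, g k : ℝ) : ℂ) = 0 := by
      push_cast
      rw [← hrestC]
      exact Finset.sum_congr rfl fun k _ => (hcast k).symm
    exact_mod_cast this
  have hgz : ∀ k ∈ univ.erase j, g k = 0 := by
    rw [← Finset.sum_eq_zero_iff_of_nonneg]
    · exact hrestR
    · intro k _
      exact Finset.sum_nonneg fun a _ => Finset.sum_nonneg fun b _ => Complex.normSq_nonneg _
  have : ((p i * p j)ᴴ * (p i * p j)).trace = 0 := by
    rw [hcast i, hgz i (Finset.mem_erase.mpr ⟨hij, mem_univ i⟩)]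
    norm_num
  exact eq_zero_of_trace_ctm _ this

set_option maxHeartbeats 1000000 in
theorem quantum_three_coloring_adjacent_commute {V : Type*} (G : SimpleGraph V) {n : ℕ}
    (f : V → Fin 3 → Matrix (Fin n) (Fin n) ℂ) (hf : IsQuantumColoring G 3 n f)
    (u v : V) (huv : G.Adj u v) (i j : Fin 3) :
    f u i * f v j = f v j * f u i := by
  obtain ⟨hproj, hsum, hedge⟩ := hf
  set P : Fin 3 → Matrix (Fin n) (Fin n) ℂ := f u with hP
  set Q : Fin 3 → Matrix (Fin n) (Fin n) ℂ := f v with hQ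
  have hPproj : ∀ a, P a * P a = P a ∧ (P a)ᴴ = P a := fun a => hproj u a
  have hQproj : ∀ a, Q a * Q a = Q a ∧ (Q a)ᴴ = Q a := fun a => hproj v a
  have hPQ : ∀ a, P a * Q a = 0 := hedge u v huv
  have hQP : ∀ a, Q a * P a = 0 := by
    intro a
    have h := congrArg conjTranspose (hPQ a)
    rw [conjTranspose_mul, (hPproj a).2, (hQproj a).2] at h
    simpa using h
  have orthP : ∀ a b, a ≠ b → P a * P b = 0 := proj_orth P hPproj (hsum u)
  have orthQ : ∀ a b, a ≠ b → Q a * Q b = 0 := proj_orth Q hQproj (hsum v)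
  have hPsum : P 0 + P 1 + P 2 = 1 := by
    have h := hsum u; rwa [Fin.sum_univ_three] at h
  have hQsum : Q 0 + Q 1 + Q 2 = 1 := by
    have h := hsum v; rwa [Fin.sum_univ_three] at h
  set D : Fin 3 → Fin 3 → Matrix (Fin n) (Fin n) ℂ :=
    fun a b => P a * Q b - Q b * P a with hD
  have hDd : ∀ a, D a a = 0 := by
    intro a; simp only [hD]; rw [hPQ a, hQP a, sub_zero]
  have hrow : ∀ a, D a 0 + D a 1 + D a 2 = 0 := by
    intro a
    have h : D a 0 + D a 1 + D a 2
        = P a * (Q 0 + Q 1 + Q 2) - (Q 0 + Q 1 + Q 2) * P a := by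
      simp only [hD]; noncomm_ring
    rw [h, hQsum, mul_one, one_mul, sub_self]
  have hcol : ∀ b, D 0 b + D 1 b + D 2 b = 0 := by
    intro b
    have h : D 0 b + D 1 b + D 2 b
        = (P 0 + P 1 + P 2) * Q b - Q b * (P 0 + P 1 + P 2) := by
      simp only [hD]; noncomm_ring
    rw [h, hPsum, mul_one, one_mul, sub_self]
  set C : Matrix (Fin n) (Fin n) ℂ := D 0 1 with hC
  have h02 : D 0 2 = -C := by
    have h := hrow 0; rw [hDd 0, zero_add, ← hC] at h
    exact eq_neg_of_add_eq_zero_right h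
  have h21 : D 2 1 = -C := by
    have h := hcol 1; rw [hDd 1, ← hC, add_zero] at h
    exact eq_neg_of_add_eq_zero_right h
  have h12 : D 1 2 = C := by
    have h := hcol 2; rw [hDd 2, add_zero, h02] at h
    have h' := eq_neg_of_add_eq_zero_right h
    rwa [neg_neg] at h'
  have h10 : D 1 0 = -C := by
    have h := hrow 1; rw [hDd 1, add_zero, h12] at h
    exact eq_neg_of_add_eq_zero_left h
  have h20 : D 2 0 = C := by
    have h := hcol 0; rw [hDd 0, zero_add, h10] at h
    exact (neg_add_eq_zero.mp h).symm
  -- C² = Q 1 * P 0 * Q 2 * P 1, whose trace is 0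
  have hCsq : C * C = Q 1 * P 0 * Q 2 * P 1 := by
    have hrepr : C * C = D 0 1 * D 1 2 := by rw [hC, h12]
    calc C * C = (P 0 * Q 1 - Q 1 * P 0) * (P 1 * Q 2 - Q 2 * P 1) := hrepr
      _ = P 0 * (Q 1 * P 1) * Q 2 - P 0 * (Q 1 * Q 2) * P 1
          - Q 1 * (P 0 * P 1) * Q 2 + Q 1 * P 0 * Q 2 * P 1 := by noncomm_ring
      _ = Q 1 * P 0 * Q 2 * P 1 := by
          rw [hQP 1, orthQ 1 2 (by decide), orthP 0 1 (by decide)]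
          simp
  have htrC : (C * C).trace = 0 := by
    rw [hCsq]
    have h : Q 1 * P 0 * Q 2 * P 1 = (Q 1 * P 0 * Q 2) * P 1 := by noncomm_ring
    rw [h, Matrix.trace_mul_comm]
    have h2 : P 1 * (Q 1 * P 0 * Q 2) = (P 1 * Q 1) * P 0 * Q 2 := by noncomm_ring
    rw [h2, hPQ 1]
    simp
  have hCH : Cᴴ = -C := by
    rw [hC]
    simp only [hD]
    rw [conjTranspose_sub, conjTranspose_mul, conjTranspose_mul,
      (hPproj 0).2, (hQproj 1).2]
    noncomm_ring
  have hCzero : C = 0 := by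
    apply eq_zero_of_trace_ctm
    rw [hCH]
    calc ((-C) * C).trace = (-(C * C)).trace := by rw [neg_mul]
      _ = -(C * C).trace := by rw [Matrix.trace_neg]
      _ = 0 := by rw [htrC, neg_zero]
  rw [← sub_eq_zero]
  fin_cases i <;> fin_cases j
  · exact hDd 0
  · show D 0 1 = 0; rw [← hC]; exact hCzero
  · show D 0 2 = 0; rw [h02, hCzero, neg_zero]
  · show D 1 0 = 0; rw [h10, hCzero, neg_zero]
  · exact hDd 1
  · show D 1 2 = 0; rw [h12]; exact hCzero
  · show D 2 0 = 0; rw [h20]; exact hCzero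
  · show D 2 1 = 0; rw [h21, hCzero, neg_zero]
  · exact hDd 2
end

section
/- Let G be a graph with vertices u and v having a common neighbor w. In any quantum 3-coloring of G, if {i,j,k} = {1,2,3} then u_i v_j u_k = 0. -/
open Matrix Finset

section Aux

variable {n : ℕ}

/-- Three idempotents summing to 1 in a matrix algebra over ℂ are mutually orthogonal. -/
lemma orth_aux (p q r : Matrix (Fin n) (Fin n) ℂ)
    (hp : p * p = p) (hq : q * q = q) (hr : r * r = r)
    (hsum : p + q + r = 1) : p * q = 0 := by
  have hpq : p + q = 1 - r := by rw [← hsum]; abel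
  have e1 : (p + q) * (p + q) = p + q + (p * q + q * p) := by
    rw [add_mul, mul_add, mul_add, hp, hq]; abel
  have e2 : (p + q) * (p + q) = p + q := by
    have t : (1 - r) * (1 - r) = 1 - r - r + r * r := by noncomm_ring
    rw [hr] at t
    rw [hpq, t]; abel
  have h1 : p * q + q * p = 0 := left_eq_add.mp (e2.symm.trans e1)
  have h2 : q * p = -(p * q) := (neg_eq_of_add_eq_zero_right h1).symm
  have h2' : p * q = -(q * p) := by rw [h2, neg_neg]
  have h3 : p * q * p = p * q := by
    calc p * q * p = -(q * p) * p := by rw [← h2']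
      _ = -(q * (p * p)) := by rw [neg_mul, mul_assoc]
      _ = -(q * p) := by rw [hp]
      _ = p * q := h2'.symm
  have h4 : p * q * p = -(p * q) := by
    calc p * q * p = p * (q * p) := by rw [mul_assoc]
      _ = p * (-(p * q)) := by rw [h2]
      _ = -(p * (p * q)) := by rw [mul_neg]
      _ = -(p * p * q) := by rw [mul_assoc]
      _ = -(p * q) := by rw [hp]
  have h5 : p * q = -(p * q) := h3.symm.trans h4
  have h6 : (2 : ℂ) • (p * q) = 0 := by
    rw [two_smul]
    exact add_eq_zero_iff_eq_neg.mpr h5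
  exact (smul_eq_zero.mp h6).resolve_left two_ne_zero

/-- Commutator identity for an idempotent. -/
lemma comm_helper (p q : Matrix (Fin n) (Fin n) ℂ) (hp : p * p = p) :
    p * (p * q - q * p) + (p * q - q * p) * p = p * q - q * p := by
  have h : p * (p * q - q * p) + (p * q - q * p) * p = p * p * q - q * (p * p) := by
    noncomm_ring
  rw [hp] at h
  exact h

/-- Projections on adjacent vertices commute (algebraic version). -/
lemma comm_adj (xa xb xc ya yb yc : Matrix (Fin n) (Fin n) ℂ)
    (ha : xa * xa = xa) (hb : xb * xb = xb) (hc : xc * xc = xc)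
    (hsx : xa + xb + xc = 1) (hsy : ya + yb + yc = 1)
    (haa : xa * ya = 0) (haa' : ya * xa = 0)
    (hbb : xb * yb = 0) (hbb' : yb * xb = 0)
    (hcc : xc * yc = 0) (hcc' : yc * xc = 0) :
    xa * yb = yb * xa := by
  -- row a
  have ra : xa * yb + xa * yc = xa := by
    have h : xa * (ya + yb + yc) = xa := by rw [hsy, mul_one]
    rw [mul_add, mul_add, haa, zero_add] at h
    exact h
  have ra' : yb * xa + yc * xa = xa := by
    have h : (ya + yb + yc) * xa = xa := by rw [hsy, one_mul]
    rw [add_mul, add_mul, haa', zero_add] at h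
    exact h
  -- row c
  have rc : xc * ya + xc * yb = xc := by
    have h : xc * (ya + yb + yc) = xc := by rw [hsy, mul_one]
    rw [mul_add, mul_add, hcc, add_zero] at h
    exact h
  have rc' : ya * xc + yb * xc = xc := by
    have h : (ya + yb + yc) * xc = xc := by rw [hsy, one_mul]
    rw [add_mul, add_mul, hcc', add_zero] at h
    exact h
  -- column b
  have cb : xa * yb + xc * yb = yb := by
    have h : (xa + xb + xc) * yb = yb := by rw [hsx, one_mul]
    rw [add_mul, add_mul, hbb, add_zero] at h
    exact h
  have cb' : yb * xa + yb * xc = yb := by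
    have h : yb * (xa + xb + xc) = yb := by rw [hsx, mul_one]
    rw [mul_add, mul_add, hbb', add_zero] at h
    exact h
  -- column c
  have cc : xa * yc + xb * yc = yc := by
    have h : (xa + xb + xc) * yc = yc := by rw [hsx, one_mul]
    rw [add_mul, add_mul, hcc, add_zero] at h
    exact h
  have cc' : yc * xa + yc * xb = yc := by
    have h : yc * (xa + xb + xc) = yc := by rw [hsx, mul_one]
    rw [mul_add, mul_add, hcc', add_zero] at h
    exact h
  -- express things
  have h1 : xa * yc = xa - xa * yb := eq_sub_of_add_eq' ra
  have h2 : yc * xa = xa - yb * xa := eq_sub_of_add_eq' ra'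
  have h3 : xb * yc = yc - xa * yc := eq_sub_of_add_eq' cc
  have h4 : yc * xb = yc - yc * xa := eq_sub_of_add_eq' cc'
  have h5 : xc * ya = xc - xc * yb := eq_sub_of_add_eq rc
  have h6 : ya * xc = xc - yb * xc := eq_sub_of_add_eq rc'
  have h7 : xa * yb = yb - xc * yb := eq_sub_of_add_eq cb
  have h8 : yb * xa = yb - yb * xc := eq_sub_of_add_eq cb'
  -- commutator equalities
  have hAbc : xb * yc - yc * xb = xa * yb - yb * xa := by
    rw [h3, h4, h1, h2]; abel
  have hAca : xc * ya - ya * xc = xa * yb - yb * xa := by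
    rw [h5, h6, h7, h8]; abel
  have I1 := comm_helper xa yb ha
  have I2 : xb * (xa * yb - yb * xa) + (xa * yb - yb * xa) * xb
      = xa * yb - yb * xa := by
    have := comm_helper xb yc hb
    rw [hAbc] at this
    exact this
  have I3 : xc * (xa * yb - yb * xa) + (xa * yb - yb * xa) * xc
      = xa * yb - yb * xa := by
    have := comm_helper xc ya hc
    rw [hAca] at this
    exact this
  have hsumEq : (xa * yb - yb * xa) + (xa * yb - yb * xa)
      = (xa * yb - yb * xa) + (xa * yb - yb * xa) + (xa * yb - yb * xa) := by
    calc (xa * yb - yb * xa) + (xa * yb - yb * xa)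
        = (xa + xb + xc) * (xa * yb - yb * xa)
          + (xa * yb - yb * xa) * (xa + xb + xc) := by rw [hsx, one_mul, mul_one]
      _ = (xa * (xa * yb - yb * xa) + (xa * yb - yb * xa) * xa)
          + (xb * (xa * yb - yb * xa) + (xa * yb - yb * xa) * xb)
          + (xc * (xa * yb - yb * xa) + (xa * yb - yb * xa) * xc) := by
            rw [add_mul, add_mul, mul_add, mul_add]; abel
      _ = (xa * yb - yb * xa) + (xa * yb - yb * xa) + (xa * yb - yb * xa) := by
            rw [I1, I2, I3]
  have hA0 : xa * yb - yb * xa = 0 := left_eq_add.mp hsumEq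
  exact sub_eq_zero.mp hA0

end Aux

theorem quantum_three_coloring_common_neighbor {V : Type*} (G : SimpleGraph V) {n : ℕ}
    (f : V → Fin 3 → Matrix (Fin n) (Fin n) ℂ) (hf : IsQuantumColoring G 3 n f)
    (u v w : V) (huw : G.Adj u w) (hvw : G.Adj v w)
    (i j k : Fin 3) (hijk : ({i, j, k} : Finset (Fin 3)) = Finset.univ) :
    f u i * f v j * f u k = 0 := by
  obtain ⟨hproj, hsum, hadj⟩ := hf
  have hdist : ∀ a b c : Fin 3, ({a, b, c} : Finset (Fin 3)) = Finset.univ →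
      a ≠ b ∧ a ≠ c ∧ b ≠ c := by decide
  obtain ⟨hij, hik, hjk⟩ := hdist i j k hijk
  -- sums reordered
  have hsum3 : ∀ z : V, f z i + f z j + f z k = 1 := by
    intro z
    have h := hsum z
    rw [← hijk, Finset.sum_insert (by simp [hij, hik]),
        Finset.sum_insert (by simp [hjk]), Finset.sum_singleton] at h
    rw [← h]; abel
  have hidem : ∀ (z : V) (a : Fin 3), f z a * f z a = f z a := fun z a => (hproj z a).1
  -- orthogonality of w's projections
  have hWki : f w k * f w i = 0 := by
    refine orth_aux (f w k) (f w i) (f w j) (hidem w k) (hidem w i) (hidem w j) ?_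
    rw [← hsum3 w]; abel
  have hWkj : f w k * f w j = 0 := by
    refine orth_aux (f w k) (f w j) (f w i) (hidem w k) (hidem w j) (hidem w i) ?_
    rw [← hsum3 w]; abel
  -- adjacency products
  have hXWi : f u i * f w i = 0 := hadj u w huw i
  have hWXk : f w k * f u k = 0 := hadj w u huw.symm k
  have hWYj : f w j * f v j = 0 := hadj w v hvw.symm j
  -- commuting of w and v projections: f w k * f v j = f v j * f w k
  have hcomm : f w k * f v j = f v j * f w k := by
    refine comm_adj (f w k) (f w j) (f w i) (f v k) (f v j) (f v i)
      (hidem w k) (hidem w j) (hidem w i) ?_ ?_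
      (hadj w v hvw.symm k) (hadj v w hvw k)
      (hadj w v hvw.symm j) (hadj v w hvw j)
      (hadj w v hvw.symm i) (hadj v w hvw i)
    · rw [← hsum3 w]; abel
    · rw [← hsum3 v]; abel
  -- resolutions
  have e1 : f u i = f u i * (f w j + f w k) := by
    have h : f w j + f w k = 1 - f w i := by rw [← hsum3 w]; abel
    rw [h, mul_sub, mul_one, hXWi, sub_zero]
  have e2 : f u k = (f w i + f w j) * f u k := by
    have h : f w i + f w j = 1 - f w k := by rw [← hsum3 w]; abel
    rw [h, sub_mul, one_mul, hWXk, sub_zero]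
  -- middle term vanishes
  have m2 : f w k * f v j * f w i = 0 := by
    rw [hcomm, mul_assoc, hWki, mul_zero]
  have m3 : f w k * f v j * f w j = 0 := by
    rw [hcomm, mul_assoc, hWkj, mul_zero]
  have middle : (f w j + f w k) * f v j * (f w i + f w j) = 0 := by
    rw [add_mul, hWYj, zero_add, mul_add, m2, m3, add_zero]
  calc f u i * f v j * f u k
      = (f u i * (f w j + f w k)) * f v j * ((f w i + f w j) * f u k) := by
        rw [← e1, ← e2]
    _ = f u i * (((f w j + f w k) * f v j * (f w i + f w j)) * f u k) := by
        noncomm_ring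
    _ = 0 := by rw [middle, zero_mul, mul_zero]
end

section
/- Let G be a graph with a flat orthogonal representation φ : V(G) → ℂ^d (all entries of each φ(v) have modulus 1/√d, adjacent vertices get orthogonal vectors). For each vertex v and i ∈ [d], let r_{v,i} = √d · (φ(v) ∘ f_i) where f_i is the i-th column of the d×d Fourier matrix F with F_{kj} = exp(2πi·kj/d)/√d and ∘ is the entrywise product. Then for each v, the vectors (r_{v,i})_{i∈[d]} form an orthonormal basis of ℂ^d, and for adjacent vertices v ∼ w, r_{v,i} ⟂ r_{w,i} for all i. Hence the projections v_i onto r_{v,i} constitute a quantum d-coloring of G. -/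
/-!
With `ζ = exp (2πi/d)` we have `r v i k = φ v k * ζ ^ (k * i)`. Since `|φ v k|² = 1/d` for every `k`,
the inner product of `r v i` and `r v i'` is `1/d` times that of the Fourier columns `i` and `i'`,
which is `d` or `0` by the geometric sum over the `d`-th roots of unity. Since `|ζ| = 1`,
the inner product of `r u i` and `r v i` is that of `φ u` and `φ v`. A square matrix with
orthonormal columns also has orthonormal rows, which gives completeness of the projections,
and rank-one projections onto orthogonal vectors multiply to zero.
-/

open Finset Complex

section StarRing

variable {R ι : Type*} [CommRing R] [StarRing R] [Fintype ι]

theorem sum_star_mul_mul_mul_eq_of_star_mul_self {x : ι → R} {c : R}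
    (hx : ∀ k, star (x k) * x k = c) (a b : ι → R) :
    ∑ k, star (x k * a k) * (x k * b k) = c * ∑ k, star (a k) * b k := by
  rw [mul_sum]
  refine sum_congr rfl fun k _ => ?_
  rw [star_mul', ← hx k]
  ring

namespace Matrix

theorem sum_vecMulVec_star_self_eq_one [DecidableEq ι] {v : ι → ι → R}
    (hv : ∀ i j, star (v i) ⬝ᵥ v j = if i = j then 1 else 0) :
    ∑ i, vecMulVec (v i) (star (v i)) = 1 := by
  have hcols : (of v)ᵀᴴ * (of v)ᵀ = 1 := by
    ext i j
    simpa [mul_apply, one_apply, dotProduct] using hv i j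
  have hrows : (of v)ᵀ * (of v)ᵀᴴ = 1 := mul_eq_one_comm.mp hcols
  ext a b
  simpa [mul_apply, sum_apply, vecMulVec_apply] using congr_fun₂ hrows a b

theorem vecMulVec_star_mul_vecMulVec_star_eq_zero {x y : ι → R} (h : star x ⬝ᵥ y = 0) :
    vecMulVec x (star x) * vecMulVec y (star y) = 0 := by
  rw [vecMulVec_mul_vecMulVec, h, zero_smul, vecMulVec_zero]

end Matrix

end StarRing

theorem geom_sum_eq_zero_of_pow_eq_one {K : Type*} [Field K] {η : K} {d : ℕ} (hηd : η ^ d = 1)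
    (hη1 : η ≠ 1) : ∑ k ∈ range d, η ^ k = 0 := by
  rw [geom_sum_eq hη1, hηd, sub_self, zero_div]

theorem IsPrimitiveRoot.star_pow_mul_pow_self {ζ : ℂ} {d : ℕ} (hζ : IsPrimitiveRoot ζ d)
    (hd : d ≠ 0) (n : ℕ) : star (ζ ^ n) * ζ ^ n = 1 := by
  rw [star_def, conj_mul', norm_pow, hζ.norm'_eq_one hd]
  simp

theorem IsPrimitiveRoot.sum_star_pow_mul_pow {ζ : ℂ} {d : ℕ} (hζ : IsPrimitiveRoot ζ d)
    (i j : Fin d) :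
    ∑ k : Fin d, star (ζ ^ ((k : ℕ) * i)) * ζ ^ ((k : ℕ) * j) = if i = j then (d : ℂ) else 0 := by
  have hd : d ≠ 0 := i.pos.ne'
  have hζ0 : ζ ≠ 0 := hζ.ne_zero hd
  set η := ζ ^ ((j : ℤ) - i) with hη
  have hterm : ∀ k : ℕ, star (ζ ^ (k * i)) * ζ ^ (k * j) = η ^ k := by
    intro k
    rw [star_pow, star_def, ← inv_eq_conj (hζ.norm'_eq_one hd), ← zpow_natCast, ← zpow_natCast,
      ← zpow_natCast, inv_zpow', ← zpow_add₀ hζ0, ← zpow_mul]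
    congr 1
    push_cast
    ring
  rw [Fin.sum_univ_eq_sum_range (fun k => star (ζ ^ (k * i)) * ζ ^ (k * j))]
  simp_rw [hterm]
  split_ifs with hij
  · simp [η, hij]
  · have hη1 : η ≠ 1 := by
      rw [Ne, hη, hζ.zpow_eq_one_iff_dvd]
      intro hdvd
      refine hij (Fin.ext ?_)
      have := Int.eq_zero_of_abs_lt_dvd hdvd (abs_lt.mpr ⟨by omega, by omega⟩)
      omega
    have hηd : η ^ d = 1 := by
      rw [hη, ← zpow_natCast, ← zpow_mul, mul_comm, zpow_mul, zpow_natCast, hζ.pow_eq_one, one_zpow]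
    exact geom_sum_eq_zero_of_pow_eq_one hηd hη1

theorem Complex.star_mul_self_eq_of_norm_eq_one_div_sqrt {z : ℂ} {n : ℕ}
    (hz : ‖z‖ = 1 / Real.sqrt n) : star z * z = 1 / n := by
  rw [star_def, conj_mul', hz, ← ofReal_pow, div_pow, Real.sq_sqrt (Nat.cast_nonneg n)]
  push_cast
  ring

theorem Complex.exp_two_pi_I_mul_mul_div_eq_pow (n k i : ℕ) :
    exp (2 * Real.pi * I * k * i / n) = exp (2 * Real.pi * I / n) ^ (k * i) := by
  rw [← exp_nat_mul]
  congr 1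
  push_cast
  ring

theorem flat_orthogonal_representation_gives_quantum_coloring
    {V : Type*} (G : SimpleGraph V) (d : ℕ) (hd : 0 < d)
    (φ : V → Fin d → ℂ)
    (hflat : ∀ v j, ‖φ v j‖ = 1 / Real.sqrt d)
    (horth : ∀ u v, G.Adj u v → ∑ j, star (φ u j) * φ v j = 0)
    (r : V → Fin d → Fin d → ℂ)
    (hr : ∀ v i k, r v i k =
      Real.sqrt d * (φ v k *
        (Complex.exp (2 * Real.pi * Complex.I * (k : ℕ) * (i : ℕ) / d) / Real.sqrt d))) :
    (∀ v (i i' : Fin d),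
      ∑ k, star (r v i k) * r v i' k = if i = i' then 1 else 0) ∧
    (∀ u v, G.Adj u v → ∀ i, ∑ k, star (r u i k) * r v i k = 0) ∧
    (∀ v, ∑ i, (Matrix.of fun a b => r v i a * star (r v i b)) = (1 : Matrix (Fin d) (Fin d) ℂ)) ∧
    (∀ u v, G.Adj u v → ∀ i,
      (Matrix.of fun a b => r u i a * star (r u i b)) *
      (Matrix.of fun a b => r v i a * star (r v i b)) = 0) := by
  set ζ := Complex.exp (2 * Real.pi * Complex.I / d)
  have hζ : IsPrimitiveRoot ζ d := isPrimitiveRoot_exp d hd.ne'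
  have hr' : ∀ v i k, r v i k = φ v k * ζ ^ ((k : ℕ) * i) := by
    intro v i k
    have hsqrt : (Real.sqrt d : ℂ) ≠ 0 := by
      exact_mod_cast (Real.sqrt_pos.mpr (Nat.cast_pos.mpr hd)).ne'
    rw [hr, exp_two_pi_I_mul_mul_div_eq_pow, mul_div_assoc', mul_div_assoc',
      mul_div_cancel_left₀ _ hsqrt]
  have horthonormal : ∀ v (i i' : Fin d),
      ∑ k, star (r v i k) * r v i' k = if i = i' then 1 else 0 := by
    intro v i i'
    simp_rw [hr', sum_star_mul_mul_mul_eq_of_star_mul_self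
      (fun k => star_mul_self_eq_of_norm_eq_one_div_sqrt (hflat v k)), hζ.sum_star_pow_mul_pow]
    have hd0 : (d : ℂ) ≠ 0 := Nat.cast_ne_zero.mpr hd.ne'
    split_ifs
    · field_simp
    · simp
  have hcolor : ∀ u v, G.Adj u v → ∀ i, ∑ k, star (r u i k) * r v i k = 0 := by
    intro u v huv i
    simp_rw [hr', mul_comm (φ _ _),
      sum_star_mul_mul_mul_eq_of_star_mul_self (fun k => hζ.star_pow_mul_pow_self hd.ne' _)]
    rw [one_mul]
    exact horth u v huv
  exact ⟨horthonormal, hcolor, fun v => Matrix.sum_vecMulVec_star_self_eq_one (horthonormal v),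
    fun u v huv i => Matrix.vecMulVec_star_mul_vecMulVec_star_eq_zero (hcolor u v huv i)⟩
end

section
/- If a graph G has a real orthogonal representation in dimension four (unit vectors in ℝ⁴ with adjacent vertices orthogonal), then G admits a quantum 4-coloring, i.e., χ_q(G) ≤ 4. -/
open Matrix Finset

/-- The quaternion-multiplication matrix whose columns give the orthonormal basis. -/
def qcol (r : Fin 4 → ℝ) : Matrix (Fin 4) (Fin 4) ℝ :=
  !![r 0, -r 1, -r 2, -r 3;
     r 1,  r 0,  r 3, -r 2;
     r 2, -r 3,  r 0,  r 1;
     r 3,  r 2, -r 1,  r 0]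

lemma qcol_colinner (x y : Fin 4 → ℝ) (i : Fin 4) :
    ∑ k, qcol x k i * qcol y k i = ∑ k, x k * y k := by
  fin_cases i <;> simp [qcol, Fin.sum_univ_four] <;> ring

lemma qcol_colsq (x : Fin 4 → ℝ) (i : Fin 4) :
    ∑ k, qcol x k i ^ 2 = ∑ k, x k ^ 2 := by
  have h := qcol_colinner x x i
  simpa [sq] using h

lemma qcol_rowinner (x : Fin 4 → ℝ) (a b : Fin 4) :
    ∑ i, qcol x a i * qcol x b i = if a = b then ∑ k, x k ^ 2 else 0 := by
  fin_cases a <;> fin_cases b <;> simp [qcol, Fin.sum_univ_four] <;> ring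

theorem real_orthogonal_rep_dim4_gives_quantum_4_coloring
    {V : Type*} (G : SimpleGraph V) (φ : V → Fin 4 → ℝ)
    (hunit : ∀ v, ∑ i, φ v i ^ 2 = 1)
    (horth : ∀ u v, G.Adj u v → ∑ i, φ u i * φ v i = 0) :
    ∃ f : V → Fin 4 → Matrix (Fin 4) (Fin 4) ℂ,
      (∀ v i, IsProjection (f v i)) ∧
      (∀ v, ∑ i, f v i = 1) ∧
      (∀ u v, G.Adj u v → ∀ i, f u i * f v i = 0) := by
  refine ⟨fun v i => Matrix.of fun a b => ((qcol (φ v) a i * qcol (φ v) b i : ℝ) : ℂ), ?_, ?_, ?_⟩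
  · intro v i
    constructor
    · ext a b
      simp only [Matrix.mul_apply, Matrix.of_apply]
      have h : ∑ k, (qcol (φ v) a i * qcol (φ v) k i) * (qcol (φ v) k i * qcol (φ v) b i)
          = qcol (φ v) a i * qcol (φ v) b i := by
        have h1 := qcol_colsq (φ v) i
        rw [hunit v] at h1
        calc ∑ k, (qcol (φ v) a i * qcol (φ v) k i) * (qcol (φ v) k i * qcol (φ v) b i)
            = (qcol (φ v) a i * qcol (φ v) b i) * ∑ k, qcol (φ v) k i ^ 2 := by
              rw [Finset.mul_sum]; apply Finset.sum_congr rfl; intro k _; ring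
          _ = qcol (φ v) a i * qcol (φ v) b i := by rw [h1, mul_one]
      calc ∑ k, ((qcol (φ v) a i * qcol (φ v) k i : ℝ) : ℂ) * ((qcol (φ v) k i * qcol (φ v) b i : ℝ) : ℂ)
          = ((∑ k, (qcol (φ v) a i * qcol (φ v) k i) * (qcol (φ v) k i * qcol (φ v) b i) : ℝ) : ℂ) := by
            push_cast; ring
        _ = _ := by rw [h]
    · ext a b
      simp only [Matrix.conjTranspose_apply, Matrix.of_apply, Complex.star_def, Complex.conj_ofReal]
      norm_cast
      ring
  · intro v
    ext a b
    have h := qcol_rowinner (φ v) a b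
    rw [hunit v] at h
    simp only [Finset.sum_apply, Matrix.sum_apply, Matrix.of_apply, Matrix.one_apply]
    calc ∑ i, ((qcol (φ v) a i * qcol (φ v) b i : ℝ) : ℂ)
        = ((∑ i, qcol (φ v) a i * qcol (φ v) b i : ℝ) : ℂ) := by push_cast; ring
      _ = _ := by rw [h]; split <;> simp
  · intro u v huv i
    ext a b
    have h := qcol_colinner (φ u) (φ v) i
    rw [horth u v huv] at h
    simp only [Matrix.mul_apply, Matrix.of_apply, Matrix.zero_apply]
    calc ∑ k, ((qcol (φ u) a i * qcol (φ u) k i : ℝ) : ℂ) * ((qcol (φ v) k i * qcol (φ v) b i : ℝ) : ℂ)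
        = ((qcol (φ u) a i * qcol (φ v) b i * ∑ k, qcol (φ u) k i * qcol (φ v) k i : ℝ) : ℂ) := by
          push_cast [Finset.mul_sum]; apply Finset.sum_congr rfl; intro k _; ring
      _ = 0 := by rw [h]; simp
end

section
/- Let G₁₃ be the graph whose vertices are the 13 lines through the origin in ℝ³ spanned by nonzero vectors with entries in {−1,0,1}, with two vertices adjacent iff the corresponding vectors are orthogonal. Then the independence number of G₁₃ is 5. -/
open Finset

/-- Representatives of the 13 lines through the origin in ℝ³ spanned by
nonzero `{-1,0,1}`-vectors. -/
def g13vec : Fin 13 → Fin 3 → ℤ :=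
  ![![1,0,0], ![0,1,0], ![0,0,1],
    ![1,1,0], ![1,-1,0], ![1,0,1], ![1,0,-1], ![0,1,1], ![0,1,-1],
    ![1,1,1], ![1,1,-1], ![1,-1,1], ![-1,1,1]]

/-- The orthogonality graph on the 13 lines. -/
def G13 : SimpleGraph (Fin 13) :=
  SimpleGraph.fromRel (fun u v => ∑ i, g13vec u i * g13vec v i = 0)

/-!
The vertices are the three coordinate axes (`0, 1, 2`), the six face diagonals (`3, …, 8`) and the
four body diagonals (`9, …, 12`) of the cube. Each axis together with the two face diagonals
orthogonal to it is an orthogonal triple, so an independent set contains at most three vertices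
that are not body diagonals. Each face diagonal is orthogonal to two of the four body diagonals,
so an independent set with at least three body diagonals contains no face diagonal, hence at most
one axis besides its at most four body diagonals.
-/

theorem SimpleGraph.IsIndepSet.card_inter_le_one {α : Type*} [DecidableEq α] {G : SimpleGraph α}
    {s t : Finset α} (hs : G.IsIndepSet (s : Set α)) (ht : G.IsClique (t : Set α)) :
    #(s ∩ t) ≤ 1 :=
  card_le_one.2 fun _ ha _ hb => by_contra fun hab =>
    hs (mem_inter.1 ha).1 (mem_inter.1 hb).1 hab (ht (mem_inter.1 ha).2 (mem_inter.1 hb).2 hab)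

namespace G13

instance : DecidableRel G13.Adj := fun u v =>
  decidable_of_iff' _ (SimpleGraph.fromRel_adj _ u v)

def axes : Finset (Fin 13) := {0, 1, 2}

def faceDiagonals : Finset (Fin 13) := {3, 4, 5, 6, 7, 8}

def bodyDiagonals : Finset (Fin 13) := {9, 10, 11, 12}

/-- The axis `i` together with the two face diagonals orthogonal to it. -/
def axisTriangle : Fin 3 → Finset (Fin 13) := ![{0, 7, 8}, {1, 5, 6}, {2, 3, 4}]

theorem isClique_axes : G13.IsClique (axes : Set (Fin 13)) := by decide

theorem isClique_axisTriangle (i : Fin 3) : G13.IsClique (axisTriangle i : Set (Fin 13)) := by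
  fin_cases i <;> decide

theorem biUnion_axisTriangle : univ.biUnion axisTriangle = bodyDiagonalsᶜ := by decide

theorem compl_bodyDiagonals_sdiff_faceDiagonals : bodyDiagonalsᶜ \ faceDiagonals = axes := by
  decide

theorem card_bodyDiagonals_filter_not_adj {f : Fin 13} (hf : f ∈ faceDiagonals) :
    #{d ∈ bodyDiagonals | ¬G13.Adj f d} = 2 := by
  revert f; decide

theorem card_bodyDiagonals : #bodyDiagonals = 4 := rfl

variable {S : Finset (Fin 13)}

theorem card_sdiff_bodyDiagonals_le_three (hS : G13.IsIndepSet (S : Set (Fin 13))) :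
    #(S \ bodyDiagonals) ≤ 3 := by
  rw [sdiff_eq_inter_compl, ← biUnion_axisTriangle, inter_biUnion]
  exact card_biUnion_le_card_mul _ _ 1 fun i _ => hS.card_inter_le_one (isClique_axisTriangle i)

theorem disjoint_faceDiagonals_of_three_le_card_inter (hS : G13.IsIndepSet (S : Set (Fin 13)))
    (hbody : 3 ≤ #(S ∩ bodyDiagonals)) : Disjoint S faceDiagonals := by
  refine disjoint_right.2 fun f hf hfS => ?_
  have hsub : S ∩ bodyDiagonals ⊆ {d ∈ bodyDiagonals | ¬G13.Adj f d} := fun d hd =>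
    mem_filter.2 ⟨(mem_inter.1 hd).2,
      fun hfd => hS hfS (mem_inter.1 hd).1 (G13.ne_of_adj hfd) hfd⟩
  have := (card_le_card hsub).trans_eq (card_bodyDiagonals_filter_not_adj hf)
  omega

theorem card_le_five_of_isIndepSet (hS : G13.IsIndepSet (S : Set (Fin 13))) : #S ≤ 5 := by
  rw [← card_sdiff_add_card_inter S bodyDiagonals]
  by_cases hbody : 3 ≤ #(S ∩ bodyDiagonals)
  · have hface := disjoint_faceDiagonals_of_three_le_card_inter hS hbody
    have hrest : S \ bodyDiagonals ⊆ S ∩ axes := by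
      intro v hv
      obtain ⟨hvS, hvbody⟩ := mem_sdiff.1 hv
      refine mem_inter.2 ⟨hvS, ?_⟩
      rw [← compl_bodyDiagonals_sdiff_faceDiagonals]
      exact mem_sdiff.2 ⟨mem_compl.2 hvbody, disjoint_left.1 hface hvS⟩
    have h1 := (card_le_card hrest).trans (hS.card_inter_le_one isClique_axes)
    have h4 := (card_le_card (inter_subset_right (s₁ := S))).trans card_bodyDiagonals.le
    omega
  · have := card_sdiff_bodyDiagonals_le_three hS
    omega

end G13

theorem G13_independence_number :
    (∃ S : Finset (Fin 13), S.card = 5 ∧ ∀ u ∈ S, ∀ v ∈ S, ¬ G13.Adj u v) ∧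
    (∀ S : Finset (Fin 13), (∀ u ∈ S, ∀ v ∈ S, ¬ G13.Adj u v) → S.card ≤ 5) :=
  ⟨⟨{0, 9, 10, 11, 12}, by decide, by decide⟩,
    fun _ hS => G13.card_le_five_of_isIndepSet fun u hu v hv _ => hS u hu v hv⟩
end

section
/- The graph G₁₃ has chromatic number 4: it admits a proper 4-coloring but no proper 3-coloring. -/
open Finset

set_option maxRecDepth 10000
set_option maxHeartbeats 2000000

instance g13adjDec : DecidableRel G13.Adj := fun u v =>
  decidable_of_iff
    (u ≠ v ∧ ((∑ i, g13vec u i * g13vec v i = 0) ∨ (∑ i, g13vec v i * g13vec u i = 0)))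
    Iff.rfl

/-- Bool check that an assignment of colors to all 13 vertices is a proper coloring,
checking exactly the 24 edges of `G13`. -/
def g13bad (x0 x1 x2 x3 x4 x5 x6 x7 x8 x9 x10 x11 x12 : Fin 3) : Bool :=
  x0 ≠ x1 && x0 ≠ x2 && x0 ≠ x7 && x0 ≠ x8 && x1 ≠ x2 && x1 ≠ x5 && x1 ≠ x6 &&
  x2 ≠ x3 && x2 ≠ x4 && x3 ≠ x4 && x3 ≠ x11 && x3 ≠ x12 && x4 ≠ x9 && x4 ≠ x10 &&
  x5 ≠ x6 && x5 ≠ x10 && x5 ≠ x12 && x6 ≠ x9 && x6 ≠ x11 && x7 ≠ x8 && x7 ≠ x10 &&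
  x7 ≠ x11 && x8 ≠ x9 && x8 ≠ x12

/-- No proper 3-coloring exists with the triangle `{0,1,2}` colored `0,1,2`. -/
lemma g13no3 : ∀ x3 x4 x5 x6 x7 x8 x9 x10 x11 x12 : Fin 3,
    g13bad 0 1 2 x3 x4 x5 x6 x7 x8 x9 x10 x11 x12 = false := by decide

/-- Any three distinct colors can be renamed injectively to `0,1,2`. -/
lemma g13perm3 : ∀ a b c : Fin 3, a ≠ b → a ≠ c → b ≠ c →
    ∃ π : Fin 3 → Fin 3, (∀ x y : Fin 3, π x = π y → x = y) ∧
      π a = 0 ∧ π b = 1 ∧ π c = 2 := by decide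

theorem G13_chromatic_number :
    G13.Colorable 4 ∧ ¬ G13.Colorable 3 := by
  constructor
  · exact ⟨SimpleGraph.Coloring.mk ![0, 1, 2, 0, 1, 0, 2, 1, 2, 0, 2, 3, 1] (by decide)⟩
  · rintro ⟨C⟩
    have h01 : C 0 ≠ C 1 := C.valid (by decide)
    have h02 : C 0 ≠ C 2 := C.valid (by decide)
    have h07 : C 0 ≠ C 7 := C.valid (by decide)
    have h08 : C 0 ≠ C 8 := C.valid (by decide)
    have h12 : C 1 ≠ C 2 := C.valid (by decide)
    have h15 : C 1 ≠ C 5 := C.valid (by decide)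
    have h16 : C 1 ≠ C 6 := C.valid (by decide)
    have h23 : C 2 ≠ C 3 := C.valid (by decide)
    have h24 : C 2 ≠ C 4 := C.valid (by decide)
    have h34 : C 3 ≠ C 4 := C.valid (by decide)
    have h311 : C 3 ≠ C 11 := C.valid (by decide)
    have h312 : C 3 ≠ C 12 := C.valid (by decide)
    have h49 : C 4 ≠ C 9 := C.valid (by decide)
    have h410 : C 4 ≠ C 10 := C.valid (by decide)
    have h56 : C 5 ≠ C 6 := C.valid (by decide)
    have h510 : C 5 ≠ C 10 := C.valid (by decide)
    have h512 : C 5 ≠ C 12 := C.valid (by decide)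
    have h69 : C 6 ≠ C 9 := C.valid (by decide)
    have h611 : C 6 ≠ C 11 := C.valid (by decide)
    have h78 : C 7 ≠ C 8 := C.valid (by decide)
    have h710 : C 7 ≠ C 10 := C.valid (by decide)
    have h711 : C 7 ≠ C 11 := C.valid (by decide)
    have h89 : C 8 ≠ C 9 := C.valid (by decide)
    have h812 : C 8 ≠ C 12 := C.valid (by decide)
    obtain ⟨π, hinj, ha, hb, hc⟩ := g13perm3 (C 0) (C 1) (C 2) h01 h02 h12
    set g : Fin 13 → Fin 3 := fun v => π (C v) with hg
    have inj : ∀ u v : Fin 13, C u ≠ C v → g u ≠ g v :=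
      fun u v h he => h (hinj _ _ he)
    have htrue : g13bad (g 0) (g 1) (g 2) (g 3) (g 4) (g 5) (g 6) (g 7) (g 8)
        (g 9) (g 10) (g 11) (g 12) = true := by
      simp [g13bad, inj _ _ h01, inj _ _ h02, inj _ _ h07, inj _ _ h08, inj _ _ h12,
        inj _ _ h15, inj _ _ h16, inj _ _ h23, inj _ _ h24, inj _ _ h34, inj _ _ h311,
        inj _ _ h312, inj _ _ h49, inj _ _ h410, inj _ _ h56, inj _ _ h510, inj _ _ h512,
        inj _ _ h69, inj _ _ h611, inj _ _ h78, inj _ _ h710, inj _ _ h711, inj _ _ h89,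
        inj _ _ h812]
    have hfalse := g13no3 (g 3) (g 4) (g 5) (g 6) (g 7) (g 8) (g 9) (g 10) (g 11) (g 12)
    have hg0 : g 0 = 0 := ha
    have hg1 : g 1 = 1 := hb
    have hg2 : g 2 = 2 := hc
    rw [← hg0, ← hg1, ← hg2, htrue] at hfalse
    exact absurd hfalse (by simp)
end

section
/- The complement of G₁₃ has chromatic number 6. -/
open Finset

/-!
Colour classes of a colouring of `G13ᶜ` are cliques of `G13`, so they have at most three
vertices: ℝ³ has no four pairwise orthogonal vectors. The four diagonals `(1,1,1)`,
`(1,1,-1)`, `(1,-1,1)`, `(-1,1,1)` (vertices 9–12) are pairwise non-orthogonal, so they get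
four distinct colours, and none of them lies in an orthogonal triple, so their classes have
at most two vertices. Five colours would then cover at most `4 * 2 + 3 = 11 < 13` vertices.
Conversely, `{e₁, e₂, e₃}`, `{(1,1,0), (1,-1,0)}` and the four diagonals, each paired with an
orthogonal vector, are six cliques covering all 13 vertices.
-/

namespace SimpleGraph

variable {V : Type*} {G : SimpleGraph V}

theorem cliqueFree_four_of_forall_adj_false
    (h : ∀ a b c d, G.Adj a b → G.Adj a c → G.Adj a d → G.Adj b c → G.Adj b d → G.Adj c d →
      False) :
    G.CliqueFree 4 := by
  classical
  rintro t ⟨ht, hcard⟩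
  obtain ⟨a, s, has, rfl, hs⟩ := card_eq_succ.1 hcard
  obtain ⟨b, c, d, hbc, hbd, hcd, rfl⟩ := card_eq_three.1 hs
  obtain ⟨hab, hac, had⟩ : a ≠ b ∧ a ≠ c ∧ a ≠ d := by simpa using has
  exact h a b c d (ht (by simp) (by simp) hab) (ht (by simp) (by simp) hac)
    (ht (by simp) (by simp) had) (ht (by simp) (by simp) hbc) (ht (by simp) (by simp) hbd)
    (ht (by simp) (by simp) hcd)

theorem IsClique.card_le_of_cliqueFree {n : ℕ} {s : Finset V} (hG : G.CliqueFree (n + 1))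
    (hs : G.IsClique (s : Set V)) : #s ≤ n := by
  by_contra! hlt
  obtain ⟨t, hts, ht⟩ := exists_subset_card_eq hlt
  exact hG t ⟨hs.subset (coe_subset.2 hts), ht⟩

theorem IsClique.card_le_two_of_isIndepSet_neighborSet {v : V} {s : Finset V}
    (hv : G.IsIndepSet (G.neighborSet v)) (hs : G.IsClique (s : Set V)) (hvs : v ∈ s) :
    #s ≤ 2 := by
  classical
  have hle : #(s.erase v) ≤ 1 := by
    refine card_le_one.2 fun a ha b hb => by_contra fun hab => ?_
    exact hv (hs hvs (mem_of_mem_erase ha) (ne_of_mem_erase ha).symm)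
      (hs hvs (mem_of_mem_erase hb) (ne_of_mem_erase hb).symm) hab
      (hs (mem_of_mem_erase ha) (mem_of_mem_erase hb) hab)
  have := card_erase_add_one hvs
  omega

theorem Coloring.isClique_colorClass_of_compl {α : Type*} (C : Gᶜ.Coloring α) (c : α) :
    G.IsClique (C.colorClass c) :=
  (isIndepSet_compl _).1 (C.isIndepSet_colorClass c)

theorem card_le_of_coloring_compl [Fintype V] {α : Type*} [Fintype α] [DecidableEq α]
    (C : Gᶜ.Coloring α) {r q : ℕ} (hr : G.CliqueFree (r + 1)) {I : Finset V}
    (hI : G.IsIndepSet (I : Set V))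
    (hq : ∀ v ∈ I, ∀ s : Finset V, G.IsClique (s : Set V) → v ∈ s → #s ≤ q) :
    Fintype.card V ≤ #I * q + (Fintype.card α - #I) * r := by
  set S : α → Finset V := fun c => {v | C v = c}
  have hS (c : α) : G.IsClique (S c : Set V) := by
    simpa [S, Coloring.colorClass] using C.isClique_colorClass_of_compl c
  have hT : #(I.image C) = #I := card_image_of_injOn fun u hu v hv huv =>
    by_contra fun hne => C.valid ((compl_adj _ _ _).2 ⟨hne, hI hu hv hne⟩) huv
  calc Fintype.card V = ∑ c, #(S c) := card_eq_sum_card_fiberwise fun _ _ => mem_univ _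
    _ = ∑ c ∈ I.image C, #(S c) + ∑ c ∈ (I.image C)ᶜ, #(S c) := (sum_add_sum_compl _ _).symm
    _ ≤ ∑ c ∈ I.image C, q + ∑ c ∈ (I.image C)ᶜ, r := by
      gcongr with c hc c
      · obtain ⟨v, hv, rfl⟩ := mem_image.1 hc
        exact hq v hv _ (hS _) (by simp [S])
      · exact (hS c).card_le_of_cliqueFree hr
    _ = #I * q + (Fintype.card α - #I) * r := by simp [card_compl, hT, mul_comm]

end SimpleGraph

open SimpleGraph

instance : DecidableRel G13.Adj := fun u v =>
  decidable_of_iff _ (fromRel_adj _ u v).symm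

theorem G13_cliqueFree_four : G13.CliqueFree 4 :=
  cliqueFree_four_of_forall_adj_false (by decide)

theorem G13_isIndepSet_diagonals :
    G13.IsIndepSet (({9, 10, 11, 12} : Finset (Fin 13)) : Set (Fin 13)) := by
  simp only [IsIndepSet, Set.Pairwise, mem_coe]
  decide

theorem G13_isIndepSet_neighborSet_of_mem_diagonals :
    ∀ v ∈ ({9, 10, 11, 12} : Finset (Fin 13)), G13.IsIndepSet (G13.neighborSet v) := by
  simp only [IsIndepSet, Set.Pairwise, mem_neighborSet]
  decide

theorem G13_compl_colorable_six : G13ᶜ.Colorable 6 :=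
  ⟨.mk ![0, 0, 0, 1, 1, 2, 3, 4, 5, 3, 2, 4, 5] (by decide)⟩

theorem G13_compl_not_colorable_five : ¬G13ᶜ.Colorable 5 := fun ⟨C⟩ => by
  have := card_le_of_coloring_compl C G13_cliqueFree_four G13_isIndepSet_diagonals
    fun v hv _ hs hvs =>
      hs.card_le_two_of_isIndepSet_neighborSet
        (G13_isIndepSet_neighborSet_of_mem_diagonals v hv) hvs
  simp at this

theorem G13_complement_chromatic_number :
    G13ᶜ.chromaticNumber = 6 :=
  chromaticNumber_eq_iff_colorable_not_colorable.2
    ⟨G13_compl_colorable_six, G13_compl_not_colorable_five⟩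
end

section
/- The automorphism group of G₁₃ has order 24. -/
open Finset

/-!
An automorphism permutes the four vertices of degree 3, the body diagonals of the cube, and this
action is faithful: each face diagonal is the only line orthogonal to a given pair of body
diagonals, and each coordinate axis is then singled out by its neighbours among the diagonals.
The quarter turn about the `z`-axis induces a 4-cycle on the body diagonals and the half turn
about `(0, 1, 1)` an adjacent transposition; these generate the full symmetric group, so the
automorphism group is `S₄`.
-/

open Equiv Perm SimpleGraph Matrix

instance inst_s15 : DecidableRel G13.Adj := fun u v =>
  decidable_of_iff' _ (SimpleGraph.fromRel_adj _ u v)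

namespace SimpleGraph

variable {V : Type*} {G : SimpleGraph V}

theorem Iso.apply_eq_self_of_forall_adj_iff (f : G ≃g G) {S : Set V} (hS : ∀ s ∈ S, f s = s)
    {v : V} (hv : ∀ w, (∀ s ∈ S, G.Adj w s ↔ G.Adj v s) → w = v) : f v = v :=
  hv (f v) fun s hs => by simpa only [hS s hs] using f.map_adj_iff (v := v) (w := s)

variable [Fintype V] [DecidableRel G.Adj]

def autDegreePerm (n : ℕ) : (G ≃g G) →* Perm {v // G.degree v = n} where
  toFun f := f.toEquiv.subtypeEquiv fun v => by rw [← f.degree_eq v]; rfl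
  map_one' := rfl
  map_mul' _ _ := rfl

end SimpleGraph

-- In `g13vec`, indices `0–2` are the coordinate axes, `3–8` the face diagonals and `9–12` the
-- body diagonals.
theorem G13_degree_eq_three_iff : ∀ v : Fin 13, G13.degree v = 3 ↔ 9 ≤ v := by decide

theorem G13_eq_of_forall_adj_bodyDiagonal_iff : ∀ v w : Fin 13, 3 ≤ v → v < 9 →
    (∀ s : Fin 13, 9 ≤ s → (G13.Adj w s ↔ G13.Adj v s)) → w = v := by decide

theorem G13_eq_of_forall_adj_diagonal_iff : ∀ v w : Fin 13,
    (∀ s : Fin 13, 3 ≤ s → (G13.Adj w s ↔ G13.Adj v s)) → w = v := by decide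

theorem G13_autDegreePerm_injective : Function.Injective (G13.autDegreePerm 3) := by
  refine (injective_iff_map_eq_one _).2 fun f hf => ?_
  have hfixBody (v : Fin 13) (hv : 9 ≤ v) : f v = v :=
    congrArg Subtype.val (Equiv.ext_iff.1 hf ⟨v, (G13_degree_eq_three_iff v).2 hv⟩)
  have hfixDiag (v : Fin 13) (hv : 3 ≤ v) : f v = v := by
    rcases lt_or_ge v 9 with hface | hbodyv
    · exact f.apply_eq_self_of_forall_adj_iff (S := {s | 9 ≤ s}) hfixBody
        (G13_eq_of_forall_adj_bodyDiagonal_iff v · hv hface)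
    · exact hfixBody v hbodyv
  exact RelIso.ext fun v => f.apply_eq_self_of_forall_adj_iff (S := {s | 3 ≤ s}) hfixDiag
    (G13_eq_of_forall_adj_diagonal_iff v)

-- `0` is a junk value, returned when `±x` is not one of the representatives.
def lineIndex (x : Fin 3 → ℤ) : Fin 13 :=
  ((List.finRange 13).find? fun w => g13vec w = x ∨ g13vec w = -x).getD 0

def lineMap (A : Matrix (Fin 3) (Fin 3) ℤ) (v : Fin 13) : Fin 13 := lineIndex (A *ᵥ g13vec v)

noncomputable def lineAut (A : Matrix (Fin 3) (Fin 3) ℤ) (hA : Function.Bijective (lineMap A))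
    (hadj : ∀ u v, G13.Adj (lineMap A u) (lineMap A v) ↔ G13.Adj u v) : G13 ≃g G13 :=
  ⟨Equiv.ofBijective _ hA, hadj _ _⟩

def quarterTurn : Matrix (Fin 3) (Fin 3) ℤ := !![0, -1, 0; 1, 0, 0; 0, 0, 1]

def halfTurn : Matrix (Fin 3) (Fin 3) ℤ := !![-1, 0, 0; 0, 0, 1; 0, 1, 0]

noncomputable def quarterTurnAut : G13 ≃g G13 := lineAut quarterTurn (by decide) (by decide)

noncomputable def halfTurnAut : G13 ≃g G13 := lineAut halfTurn (by decide) (by decide)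

abbrev bodyDiagonal (i : Fin 4) : {v // G13.degree v = 3} :=
  ⟨Fin.natAdd 9 i, by revert i; decide⟩

theorem G13_autDegreePerm_quarterTurnAut :
    G13.autDegreePerm 3 quarterTurnAut =
      List.formPerm [bodyDiagonal 0, bodyDiagonal 3, bodyDiagonal 1, bodyDiagonal 2] := by
  decide

theorem G13_autDegreePerm_halfTurnAut :
    G13.autDegreePerm 3 halfTurnAut = swap (bodyDiagonal 0) (bodyDiagonal 3) := by
  decide

theorem G13_autDegreePerm_surjective : Function.Surjective (G13.autDegreePerm 3) := by
  set σ := G13.autDegreePerm 3 quarterTurnAut with hσ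
  rw [G13_autDegreePerm_quarterTurnAut] at hσ
  have hcycle : σ.IsCycle := hσ ▸ List.isCycle_formPerm (by decide) (by decide)
  have hsupp : σ.support = Finset.univ := by
    rw [hσ, List.support_formPerm_of_nodup _ (by decide) (by decide)]
    decide
  have hswap : swap (bodyDiagonal 0) (σ (bodyDiagonal 0)) = G13.autDegreePerm 3 halfTurnAut := by
    rw [G13_autDegreePerm_halfTurnAut, hσ]
    rfl
  rw [← MonoidHom.range_eq_top, eq_top_iff,
    ← closure_cycle_adjacent_swap hcycle hsupp (bodyDiagonal 0), Subgroup.closure_le]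
  rintro _ (rfl | rfl)
  exacts [⟨_, rfl⟩, ⟨_, hswap.symm⟩]

theorem G13_automorphism_group_order :
    Nat.card (G13 ≃g G13) = 24 := by
  have hcard : Nat.card {v // G13.degree v = 3} = 4 := by
    rw [Nat.card_eq_fintype_card]
    decide
  rw [Nat.card_eq_of_bijective _
      ⟨G13_autDegreePerm_injective, G13_autDegreePerm_surjective⟩, Nat.card_perm, hcard]
  rfl
end

section
/- In any quantum 3-coloring of G₁₃, with vertices labelled so that W=(1,1,1), X=(1,−1,1), A=e₁, C=e₃, we have X_i A_j W_i = 0 and X_i C_j W_i = 0 whenever i ≠ j, and X_i W_i = X_i A_i W_i = X_i C_i W_i for all i ∈ {1,2,3}. -/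
open Finset

open Matrix

/-!
Adjacent vertices of a quantum 3-colouring have commuting projections. Hence, along a path
`x ∼ l ∼ a ∼ m ∼ w` with `l ∼ m` and `k` the colour different from `i ≠ j`, one can insert
`l_k` and `m_k`:
`x_i a_j w_i = x_i l_k a_j m_k w_i = x_i (l_k m_k) a_j w_i = 0`.
In `G₁₃` the paths `X ∼ L ∼ A ∼ M ∼ W` and `X ∼ Q ∼ C ∼ R ∼ W` have this shape, and
summing `a_j` over `j` turns the vanishing of the off-diagonal terms into
`X_i W_i = X_i A_i W_i`.
-/

theorem Fin.eq_or_eq_of_ne_three {i j k t : Fin 3} (hij : i ≠ j) (hik : i ≠ k) (hjk : j ≠ k)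
    (htk : t ≠ k) : t = i ∨ t = j := by
  revert i j k t
  decide

theorem Fin.exists_ne_ne_three {i j : Fin 3} (hij : i ≠ j) : ∃ k, i ≠ k ∧ j ≠ k := by
  revert i j
  decide

section Ring

variable {R ι : Type*} [Ring R]

theorem mul_mul_eq_mul_of_sum_eq_one [Fintype ι] {q : ι → R} (hq : ∑ t, q t = 1) {a b : R}
    {j : ι} (h : ∀ t ≠ j, a * q t * b = 0) : a * q j * b = a * b :=
  calc a * q j * b = ∑ t, a * q t * b :=
        (sum_eq_single j (fun t _ ht => h t ht) (by simp)).symm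
    _ = a * b := by rw [← sum_mul, ← mul_sum, hq, mul_one]

variable {q : Fin 3 → R} {i j k : Fin 3}

theorem mul_mul_eq_mul_of_sum_eq_one_three (hq : ∑ t, q t = 1) (hij : i ≠ j) (hik : i ≠ k)
    (hjk : j ≠ k) {a b : R} (hi : a * q i * b = 0) (hj : a * q j * b = 0) :
    a * q k * b = a * b :=
  mul_mul_eq_mul_of_sum_eq_one hq fun t ht => by
    obtain rfl | rfl := Fin.eq_or_eq_of_ne_three hij hik hjk ht <;> assumption

theorem mul_mul_eq_zero_of_sum_eq_one (hq : ∑ t, q t = 1) (hij : i ≠ j) (hik : i ≠ k)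
    (hjk : j ≠ k) {a b : R} (ha : a * q i = 0) (hb : q k * b = 0) (hab : a * b = 0) :
    a * q j * b = 0 := by
  rw [mul_mul_eq_mul_of_sum_eq_one_three hq hik hij hjk.symm (by rw [ha, zero_mul])
    (by rw [mul_assoc, hb, mul_zero]), hab]

theorem commute_of_sum_eq_one_three {p : Fin 3 → R} (hp : ∑ t, p t = 1) (hq : ∑ t, q t = 1)
    (hp_orth : ∀ i j, i ≠ j → p i * p j = 0) (hpq : ∀ i, p i * q i = 0)
    (hqp : ∀ i, q i * p i = 0) (a b : Fin 3) : Commute (p a) (q b) := by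
  obtain rfl | hab := eq_or_ne a b
  · rw [Commute, SemiconjBy, hpq, hqp]
  obtain ⟨k, hak, hbk⟩ := Fin.exists_ne_ne_three hab
  have right : p a * q b * p a = p a * q b := by
    simpa using mul_mul_eq_mul_of_sum_eq_one_three (a := p a * q b) (b := 1) hp hbk
      hab.symm hak.symm (by rw [mul_one, mul_assoc, hqp, mul_zero])
      (by rw [mul_one, mul_mul_eq_zero_of_sum_eq_one hq hab hak hbk (hpq a) (hqp k)
        (hp_orth a k hak)])
  have left : p a * (q b * p a) = q b * p a := by
    simpa [mul_assoc] using mul_mul_eq_mul_of_sum_eq_one_three (a := 1) (b := q b * p a) hp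
      hbk hab.symm hak.symm (by rw [one_mul, ← mul_assoc, hpq, zero_mul])
      (by rw [one_mul, ← mul_assoc, mul_mul_eq_zero_of_sum_eq_one hq hbk.symm hak.symm hab.symm
        (hpq k) (hqp a) (hp_orth k a hak.symm)])
  rw [Commute, SemiconjBy, ← right, ← left, mul_assoc]

end Ring

section Projection

open scoped MatrixOrder ComplexOrder

variable {n : ℕ} {ι : Type*} [Fintype ι] [DecidableEq ι]

theorem IsProjection.mul_eq_zero_of_sum_eq_one {p : ι → Matrix (Fin n) (Fin n) ℂ}
    (hp : ∀ i, IsProjection (p i)) (hsum : ∑ t, p t = 1) {i j : ι} (hij : i ≠ j) :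
    p i * p j = 0 := by
  have hsq : ∀ t, (p t * p j)ᴴ * (p t * p j) = p j * p t * p j := fun t => by
    rw [conjTranspose_mul, (hp t).2, (hp j).2, mul_assoc, ← mul_assoc (p t), (hp t).1,
      ← mul_assoc]
  -- `p j (∑ p) p j = p j` and its `t = j` term is already `p j`: a sum of positives vanishes
  have hrest : ∑ t ∈ univ.erase j, (p t * p j)ᴴ * (p t * p j) = 0 := by
    have h := add_sum_erase univ (fun t => p j * p t * p j) (mem_univ j)
    have htot : ∑ t, p j * p t * p j = p j := by
      rw [← sum_mul, ← mul_sum, hsum, mul_one, (hp j).1]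
    rw [htot, (hp j).1, (hp j).1] at h
    simpa only [hsq] using add_eq_left.mp h
  have hzero := (sum_eq_zero_iff_of_nonneg fun t _ => star_mul_self_nonneg (p t * p j)).mp
    hrest i (mem_erase.mpr ⟨hij, mem_univ i⟩)
  exact conjTranspose_mul_self_eq_zero.mp hzero

end Projection

namespace IsQuantumColoring

variable {V : Type*} {G : SimpleGraph V} {n : ℕ} {f : V → Fin 3 → Matrix (Fin n) (Fin n) ℂ}

theorem commute_of_adj (hf : IsQuantumColoring G 3 n f) {u v : V} (huv : G.Adj u v)
    (a b : Fin 3) : Commute (f u a) (f v b) :=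
  commute_of_sum_eq_one_three (hf.2.1 u) (hf.2.1 v)
    (fun _ _ => IsProjection.mul_eq_zero_of_sum_eq_one (hf.1 u) (hf.2.1 u))
    (hf.2.2 u v huv) (hf.2.2 v u huv.symm) a b

theorem mul_mul_eq_zero_of_path (hf : IsQuantumColoring G 3 n f) {x l a m w : V}
    (hxl : G.Adj x l) (hla : G.Adj l a) (ham : G.Adj a m) (hmw : G.Adj m w) (hlm : G.Adj l m)
    {i j : Fin 3} (hij : i ≠ j) : f x i * f a j * f w i = 0 := by
  obtain ⟨k, hik, hjk⟩ := Fin.exists_ne_ne_three hij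
  have hadj := hf.2.2
  calc f x i * f a j * f w i = f x i * f l k * (f a j * f w i) := by
        rw [mul_mul_eq_mul_of_sum_eq_one_three (hf.2.1 l) hij hik hjk
          (by rw [hadj x l hxl, zero_mul]) (by rw [mul_assoc, ← mul_assoc (f l j),
            hadj l a hla, zero_mul, mul_zero]), mul_assoc]
    _ = f x i * f l k * f a j * f m k * f w i := by
        rw [mul_mul_eq_mul_of_sum_eq_one_three (a := f x i * f l k * f a j) (hf.2.1 m) hij hik
          hjk (by rw [mul_assoc, hadj m w hmw, mul_zero]) (by rw [mul_assoc _ (f a j),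
            hadj a m ham, mul_zero, zero_mul]), mul_assoc (f x i * f l k)]
    _ = f x i * (f l k * f m k) * f a j * f w i := by
        rw [mul_assoc _ (f a j), (hf.commute_of_adj ham j k).eq]
        simp only [mul_assoc]
    _ = 0 := by rw [hadj l m hlm, mul_zero, zero_mul, zero_mul]

end IsQuantumColoring

instance G13.instDecidableRelAdj : DecidableRel G13.Adj := fun u v =>
  decidable_of_iff (u ≠ v ∧ ∑ i, g13vec u i * g13vec v i = 0) <| by
    simp only [G13, SimpleGraph.fromRel_adj, mul_comm, or_self]

/-- In `g13vec`, vertex `0` is `A = e₁`, vertex `2` is `C = e₃`,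
vertex `9` is `W = (1,1,1)` and vertex `11` is `X = (1,-1,1)`. -/
theorem G13_quantum_three_coloring_XW_relations {n : ℕ}
    (f : Fin 13 → Fin 3 → Matrix (Fin n) (Fin n) ℂ)
    (hf : IsQuantumColoring G13 3 n f) :
    (∀ i j : Fin 3, i ≠ j → f 11 i * f 0 j * f 9 i = 0) ∧
    (∀ i j : Fin 3, i ≠ j → f 11 i * f 2 j * f 9 i = 0) ∧
    (∀ i : Fin 3, f 11 i * f 9 i = f 11 i * f 0 i * f 9 i) ∧
    (∀ i : Fin 3, f 11 i * f 9 i = f 11 i * f 2 i * f 9 i) := by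
  -- paths `X ∼ L ∼ A ∼ M ∼ W` and `X ∼ Q ∼ C ∼ R ∼ W`, where `L, M = (0,1,±1)`
  -- are the vertices `7, 8` and `Q, R = (1,±1,0)` the vertices `3, 4`
  have hA : ∀ i j : Fin 3, i ≠ j → f 11 i * f 0 j * f 9 i = 0 := fun _ _ =>
    hf.mul_mul_eq_zero_of_path (l := 7) (m := 8) (by decide) (by decide) (by decide)
      (by decide) (by decide)
  have hC : ∀ i j : Fin 3, i ≠ j → f 11 i * f 2 j * f 9 i = 0 := fun _ _ =>
    hf.mul_mul_eq_zero_of_path (l := 3) (m := 4) (by decide) (by decide) (by decide)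
      (by decide) (by decide)
  exact ⟨hA, hC,
    fun i => (mul_mul_eq_mul_of_sum_eq_one (hf.2.1 0) fun j hj => hA i j hj.symm).symm,
    fun i => (mul_mul_eq_mul_of_sum_eq_one (hf.2.1 2) fun j hj => hC i j hj.symm).symm⟩
end
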